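/- arXiv:1910.09056 — 2 statements merged into one kernel-verified Lean document; each statement's English description precedes it below -/
import Mathlib

section
/- Consider i.i.d. draws z₁, z₂, ... ∼ q, importance weights wₖ = p(zₖ)/q(zₖ), acceptance indicator c, and L = min{k : c(zₖ) = 1}. Assume q(A) = E_{z∼q}[c(z)] > 0 and p(A) = E_{z∼p}[c(z)] > 0. Then E[ ∏_{k=1}^{L-1} wₖ ] = q(A)/p(A). -/
open MeasureTheory ProbabilityTheory
open scoped ENNReal

/-!
Split the sample space according to the value `n` of the first acceptance time `L`. On
`{L = n}` the integrand is `∏_{k<n} (1_{Aᶜ} w)(ζ k) · 1_A(ζ n)`, an expression that vanishes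
off `{L = n}`; by independence its expectation is `(∫_{Aᶜ} w dq)^n q(A) = p(Aᶜ)^n q(A)`.
Because `q(A) > 0`, `L` is almost surely finite, so the expectation is the geometric series
`q(A) / (1 - p(Aᶜ)) = q(A) / p(A)`.
-/

section

variable {Z : Type*}

/-- Factor `k` of the weight of the event "rejected at every step `k < n`, accepted at step
`n`". -/
noncomputable def rejectThenAccept (A : Set Z) (w : Z → ℝ≥0∞) (n : ℕ) : ℕ → Z → ℝ≥0∞ :=
  Function.update (fun _ => Aᶜ.indicator w) n (A.indicator 1)

variable {A : Set Z} {w : Z → ℝ≥0∞}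

theorem prod_range_succ_rejectThenAccept (n : ℕ) (x : ℕ → Z) :
    ∏ k ∈ Finset.range (n + 1), rejectThenAccept A w n k (x k)
      = (∏ k ∈ Finset.range n, Aᶜ.indicator w (x k)) * A.indicator 1 (x n) := by
  rw [Finset.prod_range_succ]
  congr 1
  · refine Finset.prod_congr rfl fun k hk => ?_
    rw [rejectThenAccept, Function.update_of_ne (Finset.mem_range.1 hk).ne]
  · rw [rejectThenAccept, Function.update_self]

theorem measurable_rejectThenAccept [MeasurableSpace Z] (hw : Measurable w) (hA : MeasurableSet A)
    (n k : ℕ) : Measurable (rejectThenAccept A w n k) := by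
  unfold rejectThenAccept
  rcases eq_or_ne k n with rfl | hkn
  · rw [Function.update_self]
    exact measurable_one.indicator hA
  · rw [Function.update_of_ne hkn]
    exact hw.indicator hA.compl

/-- Only the term `n = sInf {k | x k ∈ A}` of the series is nonzero. -/
theorem prod_range_sInf_eq_tsum_rejectThenAccept {x : ℕ → Z} (hx : ∃ n, x n ∈ A) :
    ∏ k ∈ Finset.range (sInf {k | x k ∈ A}), w (x k)
      = ∑' n, ∏ k ∈ Finset.range (n + 1), rejectThenAccept A w n k (x k) := by
  set L := sInf {k | x k ∈ A}
  have hL : x L ∈ A := Nat.sInf_mem hx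
  have hbefore : ∀ k < L, x k ∉ A := fun k hk => Nat.notMem_of_lt_sInf hk
  rw [tsum_eq_single L]
  · rw [prod_range_succ_rejectThenAccept, Set.indicator_of_mem hL, Pi.one_apply, mul_one]
    refine Finset.prod_congr rfl fun k hk => ?_
    exact (Set.indicator_of_mem (hbefore k (Finset.mem_range.1 hk)) w).symm
  · intro n hn
    rw [prod_range_succ_rejectThenAccept]
    rcases hn.lt_or_gt with hlt | hgt
    · rw [Set.indicator_of_notMem (hbefore n hlt), mul_zero]
    · have hL_rejected : Aᶜ.indicator w (x L) = 0 :=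
        Set.indicator_of_notMem (Set.notMem_compl_iff.2 hL) w
      rw [Finset.prod_eq_zero (Finset.mem_range.2 hgt) hL_rejected, zero_mul]

end

namespace ProbabilityTheory

variable {ι Ω Z : Type*} [MeasurableSpace Ω] [MeasurableSpace Z] {P : Measure Ω} {μ : Measure Z}

theorem iIndepFun.lintegral_prod_comp {ζ : ι → Ω → Z} (hindep : iIndepFun ζ P)
    (hζ : ∀ i, Measurable (ζ i)) (hlaw : ∀ i, P.map (ζ i) = μ) {g : ι → Z → ℝ≥0∞}
    (hg : ∀ i, Measurable (g i)) (s : Finset ι) :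
    ∫⁻ ω, ∏ i ∈ s, g i (ζ i ω) ∂P = ∏ i ∈ s, ∫⁻ z, g i z ∂μ := by
  rw [lintegral_prod_eq_prod_lintegral_of_indepFun s (fun i ω => g i (ζ i ω))
    (hindep.comp g hg) fun i => (hg i).comp (hζ i)]
  refine Finset.prod_congr rfl fun i _ => ?_
  rw [← hlaw i, lintegral_map (hg i) (hζ i)]

variable {ζ : ℕ → Ω → Z} {A : Set Z}

theorem iIndepFun.ae_exists_mem [IsProbabilityMeasure μ] (hindep : iIndepFun ζ P)
    (hζ : ∀ n, Measurable (ζ n)) (hlaw : ∀ n, P.map (ζ n) = μ) (hA : MeasurableSet A)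
    (hμA : 0 < μ A) : ∀ᵐ ω ∂P, ∃ n, ζ n ω ∈ A := by
  have hmiss : ∀ n, P (⋂ k ∈ Finset.range n, ζ k ⁻¹' Aᶜ) = μ Aᶜ ^ n := fun n => by
    rw [hindep.measure_inter_preimage_eq_mul _ fun k _ => hA.compl]
    simp only [← Measure.map_apply (hζ _) hA.compl, hlaw, Finset.prod_const, Finset.card_range]
  have hbound : ∀ n, P {ω | ¬∃ n, ζ n ω ∈ A} ≤ μ Aᶜ ^ n := fun n =>
    hmiss n ▸ measure_mono fun ω hω => by simpa using fun k (_ : k < n) => not_exists.1 hω k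
  have hμAc : μ Aᶜ < 1 := by
    rw [prob_compl_eq_one_sub hA]
    exact ENNReal.sub_lt_self ENNReal.one_ne_top one_ne_zero hμA.ne'
  exact ae_iff.2 <| nonpos_iff_eq_zero.1 <|
    ge_of_tendsto' (ENNReal.tendsto_pow_atTop_nhds_zero_of_lt_one hμAc) hbound

theorem iIndepFun.lintegral_prod_rejectThenAccept (hindep : iIndepFun ζ P)
    (hζ : ∀ n, Measurable (ζ n)) (hlaw : ∀ n, P.map (ζ n) = μ) {w : Z → ℝ≥0∞}
    (hw : Measurable w) (hA : MeasurableSet A) (n : ℕ) :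
    ∫⁻ ω, ∏ k ∈ Finset.range (n + 1), rejectThenAccept A w n k (ζ k ω) ∂P
      = (∫⁻ z in Aᶜ, w z ∂μ) ^ n * μ A := by
  rw [hindep.lintegral_prod_comp hζ hlaw (measurable_rejectThenAccept hw hA n),
    Finset.prod_range_succ, rejectThenAccept, Function.update_self, lintegral_indicator_one hA,
    ← lintegral_indicator hA.compl]
  congr 1
  rw [Finset.prod_congr rfl fun k hk => by rw [Function.update_of_ne (Finset.mem_range.1 hk).ne],
    Finset.prod_const, Finset.card_range]

theorem iIndepFun.lintegral_prod_range_sInf [IsProbabilityMeasure μ] (hindep : iIndepFun ζ P)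
    (hζ : ∀ n, Measurable (ζ n)) (hlaw : ∀ n, P.map (ζ n) = μ) {w : Z → ℝ≥0∞}
    (hw : Measurable w) (hA : MeasurableSet A) (hμA : 0 < μ A) :
    ∫⁻ ω, ∏ k ∈ Finset.range (sInf {k | ζ k ω ∈ A}), w (ζ k ω) ∂P
      = μ A / (1 - ∫⁻ z in Aᶜ, w z ∂μ) := by
  have hmeas : ∀ n, Measurable fun ω =>
      ∏ k ∈ Finset.range (n + 1), rejectThenAccept A w n k (ζ k ω) := fun n =>
    Finset.measurable_prod _ fun k _ => (measurable_rejectThenAccept hw hA n k).comp (hζ k)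
  calc ∫⁻ ω, ∏ k ∈ Finset.range (sInf {k | ζ k ω ∈ A}), w (ζ k ω) ∂P
      = ∫⁻ ω, ∑' n, ∏ k ∈ Finset.range (n + 1), rejectThenAccept A w n k (ζ k ω) ∂P :=
        lintegral_congr_ae <| (hindep.ae_exists_mem hζ hlaw hA hμA).mono fun _ hω =>
          prod_range_sInf_eq_tsum_rejectThenAccept hω
    _ = ∑' n, (∫⁻ z in Aᶜ, w z ∂μ) ^ n * μ A := by
        rw [lintegral_tsum fun n => (hmeas n).aemeasurable]
        exact tsum_congr (hindep.lintegral_prod_rejectThenAccept hζ hlaw hw hA)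
    _ = μ A / (1 - ∫⁻ z in Aᶜ, w z ∂μ) := by
        rw [ENNReal.tsum_mul_right, ENNReal.tsum_geometric, div_eq_mul_inv, mul_comm]

end ProbabilityTheory

theorem rejected_weights_product_mean_general {Z Ω : Type*} [MeasurableSpace Z] [MeasurableSpace Ω]
    (P : Measure Ω)
    (μp μq : Measure Z) [IsProbabilityMeasure μp] [IsProbabilityMeasure μq]
    (w : Z → ℝ≥0∞) (hw : Measurable w) (habs : μp = μq.withDensity w)
    (A : Set Z) (hA : MeasurableSet A) (hqA : 0 < μq A)
    (ζ : ℕ → Ω → Z) (hζ : ∀ k, Measurable (ζ k))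
    (hindep : iIndepFun ζ P)
    (hlaw : ∀ k, P.map (ζ k) = μq) :
    ∫⁻ ω, ∏ k ∈ Finset.range (sInf {k | ζ k ω ∈ A}), w (ζ k ω) ∂P
      = μq A / μp A := by
  have hrejected : ∫⁻ z in Aᶜ, w z ∂μq = μp Aᶜ := by rw [habs, withDensity_apply w hA.compl]
  rw [hindep.lintegral_prod_range_sInf hζ hlaw hw hA hqA, hrejected, prob_compl_eq_one_sub hA,
    ENNReal.sub_sub_cancel ENNReal.one_ne_top prob_le_one]

/-- Expected product of the importance weights of the rejected samples:
for i.i.d. draws `ζ k ∼ q`, weights `w = dp/dq`, acceptance set `A` and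
`L = min {k | ζ k ∈ A}`, one has `E[∏_{k<L} w(ζ k)] = q(A)/p(A)`.
(The product over the empty set, when the first draw is accepted, is `1`.) -/
theorem rejected_weights_product_mean {Z Ω : Type*} [MeasurableSpace Z] [MeasurableSpace Ω]
    (P : Measure Ω) [IsProbabilityMeasure P]
    (μp μq : Measure Z) [IsProbabilityMeasure μp] [IsProbabilityMeasure μq]
    (w : Z → ℝ≥0∞) (hw : Measurable w) (habs : μp = μq.withDensity w)
    (A : Set Z) (hA : MeasurableSet A) (hqA : 0 < μq A) (hpA : 0 < μp A)
    (ζ : ℕ → Ω → Z) (hζ : ∀ k, Measurable (ζ k))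
    (hindep : iIndepFun ζ P)
    (hlaw : ∀ k, P.map (ζ k) = μq) :
    ∫⁻ ω, ∏ k ∈ Finset.range (sInf {k | ζ k ω ∈ A}), w (ζ k ω) ∂P
      = μq A / μp A :=
  rejected_weights_product_mean_general P μp μq w hw habs A hA hqA ζ hζ hindep hlaw
end

section
/- Under the setup of the rejection sampling loop with i.i.d. proposals zₖ ∼ q, weights wₖ = p(zₖ)/q(zₖ), and stopping time L = min{k : c(zₖ)=1}: define S = E_{z∼q}[ (p(z)/q(z))² · (1 - p(A|z)) ] where p(A|z) = c(z). If S ≥ 1, then E[ (∏_{k=1}^{L-1} wₖ)² ] = ∞, and hence the variance of ∏_{k=1}^{L-1} wₖ is infinite. -/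
/-!
Split `Ω` according to the index `n` of the first accepted proposal. On that event the squared
weight product factors, by independence, into `n` rejected factors, each integrating to
`S = ∫⁻ z in Aᶜ, w z ^ 2 ∂μq ≥ 1`, and one accepted factor integrating to `μq A`. Hence the second
moment dominates `∑ₙ Sⁿ μq A ≥ ∑ₙ μq A = ∞`.
-/

open MeasureTheory ProbabilityTheory Finset
open scoped ENNReal

section

variable {Z Ω : Type*}

lemma lintegral_prod_comp_eq_prod_lintegral [MeasurableSpace Z] [MeasurableSpace Ω] {ι : Type*}
    {P : Measure Ω} {μ : Measure Z}
    {ζ : ι → Ω → Z} (hζ : ∀ i, Measurable (ζ i)) (hindep : iIndepFun ζ P)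
    (hlaw : ∀ i, P.map (ζ i) = μ) (g : ι → Z → ℝ≥0∞) (hg : ∀ i, Measurable (g i))
    (s : Finset ι) :
    ∫⁻ ω, ∏ i ∈ s, g i (ζ i ω) ∂P = ∏ i ∈ s, ∫⁻ z, g i z ∂μ := by
  refine (lintegral_prod_eq_prod_lintegral_of_indepFun s _ (hindep.comp g hg)
    fun i => (hg i).comp (hζ i)).trans (prod_congr rfl fun i _ => ?_)
  rw [← hlaw i, lintegral_map (hg i) (hζ i)]
  rfl

def firstHitEvent (ζ : ℕ → Ω → Z) (A : Set Z) (n : ℕ) : Set Ω :=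
  {ω | (∀ k < n, ζ k ω ∉ A) ∧ ζ n ω ∈ A}

variable {ζ : ℕ → Ω → Z} {A : Set Z}

lemma measurableSet_firstHitEvent [MeasurableSpace Z] [MeasurableSpace Ω]
    (hζ : ∀ k, Measurable (ζ k)) (hA : MeasurableSet A) (n : ℕ) :
    MeasurableSet (firstHitEvent ζ A n) := by
  simp only [firstHitEvent, Set.ofPred_and, Set.ofPred_forall]
  exact .inter (.iInter fun k => .iInter fun _ => hζ k hA.compl) (hζ n hA)

lemma pairwise_disjoint_firstHitEvent (ζ : ℕ → Ω → Z) (A : Set Z) :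
    Pairwise (Function.onFun Disjoint (firstHitEvent ζ A)) := by
  have hlt : ∀ m n, m < n → Disjoint (firstHitEvent ζ A m) (firstHitEvent ζ A n) :=
    fun m n hmn => Set.disjoint_left.2 fun _ hm hn => hn.1 m hmn hm.2
  intro m n hmn
  rcases hmn.lt_or_gt with h | h
  exacts [hlt m n h, (hlt n m h).symm]

lemma sInf_eq_of_mem_firstHitEvent {n : ℕ} {ω : Ω} (hω : ω ∈ firstHitEvent ζ A n) :
    sInf {k | ζ k ω ∈ A} = n :=
  le_antisymm (Nat.sInf_le hω.2) <| le_of_not_gt fun hlt =>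
    hω.1 _ hlt (Nat.sInf_mem (s := {k | ζ k ω ∈ A}) ⟨n, hω.2⟩)

lemma indicator_firstHitEvent_prod (f : Z → ℝ≥0∞) (n : ℕ) (ω : Ω) :
    (firstHitEvent ζ A n).indicator
        (fun ω => ∏ k ∈ range (sInf {k | ζ k ω ∈ A}), f (ζ k ω)) ω
      = (∏ k ∈ range n, Aᶜ.indicator f (ζ k ω)) * A.indicator 1 (ζ n ω) := by
  by_cases hω : ω ∈ firstHitEvent ζ A n
  · rw [Set.indicator_of_mem hω, sInf_eq_of_mem_firstHitEvent hω,
      Set.indicator_of_mem hω.2, Pi.one_apply, mul_one]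
    exact prod_congr rfl fun k hk =>
      (Set.indicator_of_mem (hω.1 k (mem_range.1 hk)) f).symm
  · rw [Set.indicator_of_notMem hω]
    simp only [firstHitEvent, Set.mem_ofPred_eq, not_and_or, not_forall, not_not] at hω
    rcases hω with ⟨k, hk, hkA⟩ | hnA
    · rw [prod_eq_zero (mem_range.2 hk) (Set.indicator_of_notMem (not_not.2 hkA) f), zero_mul]
    · rw [Set.indicator_of_notMem hnA, mul_zero]

lemma lintegral_firstHitEvent_prod [MeasurableSpace Z] [MeasurableSpace Ω]
    {P : Measure Ω} {μ : Measure Z}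
    (hζ : ∀ k, Measurable (ζ k)) (hindep : iIndepFun ζ P) (hlaw : ∀ k, P.map (ζ k) = μ)
    (hA : MeasurableSet A) {f : Z → ℝ≥0∞} (hf : Measurable f) (n : ℕ) :
    ∫⁻ ω in firstHitEvent ζ A n, ∏ k ∈ range (sInf {k | ζ k ω ∈ A}), f (ζ k ω) ∂P
      = (∫⁻ z in Aᶜ, f z ∂μ) ^ n * μ A := by
  let g : ℕ → Z → ℝ≥0∞ := fun k => if k < n then Aᶜ.indicator f else A.indicator 1
  have hg : ∀ k, Measurable (g k) := fun k => by
    by_cases hk : k < n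
    · simpa [g, hk] using hf.indicator hA.compl
    · simpa [g, hk] using measurable_one.indicator hA
  have hg_lt : ∀ k ∈ range n, g k = Aᶜ.indicator f := fun k hk => if_pos (mem_range.1 hk)
  have hg_n : g n = A.indicator 1 := if_neg (lt_irrefl n)
  calc ∫⁻ ω in firstHitEvent ζ A n, ∏ k ∈ range (sInf {k | ζ k ω ∈ A}), f (ζ k ω) ∂P
      = ∫⁻ ω, ∏ k ∈ range (n + 1), g k (ζ k ω) ∂P := by
        rw [← lintegral_indicator (measurableSet_firstHitEvent hζ hA n)]
        refine lintegral_congr fun ω => ?_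
        rw [indicator_firstHitEvent_prod, prod_range_succ, hg_n]
        exact congrArg (· * _) <| prod_congr rfl fun k hk => by rw [hg_lt k hk]
    _ = ∏ k ∈ range (n + 1), ∫⁻ z, g k z ∂μ :=
        lintegral_prod_comp_eq_prod_lintegral hζ hindep hlaw g hg _
    _ = (∫⁻ z in Aᶜ, f z ∂μ) ^ n * μ A := by
        rw [prod_range_succ, hg_n, lintegral_indicator_one hA,
          prod_congr rfl fun k hk => by rw [hg_lt k hk], prod_const, card_range,
          lintegral_indicator hA.compl]

end

theorem rejected_weights_product_infinite_variance_general {Z Ω : Type*}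
    [MeasurableSpace Z] [MeasurableSpace Ω]
    (P : Measure Ω)
    (μq : Measure Z)
    (w : Z → ℝ≥0∞) (hw : Measurable w)
    (A : Set Z) (hA : MeasurableSet A) (hqA : 0 < μq A)
    (ζ : ℕ → Ω → Z) (hζ : ∀ k, Measurable (ζ k))
    (hindep : iIndepFun ζ P)
    (hlaw : ∀ k, P.map (ζ k) = μq)
    (hS : 1 ≤ ∫⁻ z in Aᶜ, (w z) ^ 2 ∂μq) :
    ∫⁻ ω, (∏ k ∈ Finset.range (sInf {k | ζ k ω ∈ A}), w (ζ k ω)) ^ 2 ∂P = ∞ := by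
  refine top_le_iff.1 ?_
  calc ∞ = ∑' _ : ℕ, μq A := (ENNReal.tsum_const_eq_top_of_ne_zero hqA.ne').symm
    _ ≤ ∑' n : ℕ, (∫⁻ z in Aᶜ, w z ^ 2 ∂μq) ^ n * μq A :=
        ENNReal.tsum_le_tsum fun n => le_mul_of_one_le_left' (one_le_pow₀ hS)
    _ = ∑' n : ℕ, ∫⁻ ω in firstHitEvent ζ A n,
          (∏ k ∈ range (sInf {k | ζ k ω ∈ A}), w (ζ k ω)) ^ 2 ∂P := by
        simp_rw [← prod_pow]
        exact tsum_congr fun n =>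
          (lintegral_firstHitEvent_prod hζ hindep hlaw hA (hw.pow_const 2) n).symm
    _ = ∫⁻ ω in ⋃ n, firstHitEvent ζ A n,
          (∏ k ∈ range (sInf {k | ζ k ω ∈ A}), w (ζ k ω)) ^ 2 ∂P :=
        (lintegral_iUnion (measurableSet_firstHitEvent hζ hA)
          (pairwise_disjoint_firstHitEvent ζ A) _).symm
    _ ≤ _ := setLIntegral_le_lintegral _ _

/-- If `S = E_{z∼q}[(p(z)/q(z))² (1 - c(z))] ≥ 1`, then the second moment of the
product of rejected importance weights `∏_{k<L} w(ζ k)` is infinite (hence its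
variance is infinite). -/
theorem rejected_weights_product_infinite_variance {Z Ω : Type*}
    [MeasurableSpace Z] [MeasurableSpace Ω]
    (P : Measure Ω) [IsProbabilityMeasure P]
    (μp μq : Measure Z) [IsProbabilityMeasure μp] [IsProbabilityMeasure μq]
    (w : Z → ℝ≥0∞) (hw : Measurable w) (habs : μp = μq.withDensity w)
    (A : Set Z) (hA : MeasurableSet A) (hqA : 0 < μq A) (hpA : 0 < μp A)
    (ζ : ℕ → Ω → Z) (hζ : ∀ k, Measurable (ζ k))
    (hindep : iIndepFun ζ P)
    (hlaw : ∀ k, P.map (ζ k) = μq)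
    (hS : 1 ≤ ∫⁻ z in Aᶜ, (w z) ^ 2 ∂μq) :
    ∫⁻ ω, (∏ k ∈ Finset.range (sInf {k | ζ k ω ∈ A}), w (ζ k ω)) ^ 2 ∂P = ∞ :=
  rejected_weights_product_infinite_variance_general P μq w hw A hA hqA ζ hζ hindep hlaw hS
end
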